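/- Bias bound via smoothness of the truth. Assume f₀ = 0, g₀ = 0, λ = σ⁻², υ* = (f*, g*) ∈ Υ₀, and the prior-coordination bound ‖Γ g*‖² ≤ C_{G|Γ} ‖G f*‖² for some constant C_{G|Γ} > 0. Then: (a) σ⁻²‖g* − g*_G‖² + λ‖A(f*_G) − g*_G‖² ≤ ‖G f*‖² + ‖Γ g*‖²; and (b) 𝔼L_G(υ*_G) − 𝔼L_G(υ*) ≤ (1/2)(‖G f*‖² + ‖Γ g*‖²) ≤ ((C_{G|Γ} + 1)/2)·‖G f*‖². -/

import Mathlib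

open MeasureTheory Matrix Real

noncomputable section

namespace Calming

/-- Euclidean norm of a finitely indexed real vector. -/
def enorm {n : Type*} [Fintype n] (v : n → ℝ) : ℝ := Real.sqrt (∑ i, (v i) ^ 2)

/-- Operator (spectral) norm of a square real matrix. -/
def opNorm {n : Type*} [Fintype n] [DecidableEq n] (B : Matrix n n ℝ) : ℝ :=
  ‖Matrix.toEuclideanCLM (𝕜 := ℝ) B‖

/-- The quantile function `z(B,x) = √(tr B) + √(2‖B‖x)`. -/
def zq {n : Type*} [Fintype n] [DecidableEq n] (B : Matrix n n ℝ) (x : ℝ) : ℝ :=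
  Real.sqrt B.trace + Real.sqrt (2 * opNorm B * x)

open Classical in
/-- Positive semidefinite square root of a matrix (junk value `0` otherwise). -/
def matSqrt {n : Type*} [Fintype n] [DecidableEq n] (B : Matrix n n ℝ) : Matrix n n ℝ :=
  if h : B.PosSemidef then (h.1.eigenvectorUnitary : Matrix n n ℝ) *
    diagonal ((RCLike.ofReal : ℝ → ℝ) ∘ Real.sqrt ∘ h.1.eigenvalues) *
    (star h.1.eigenvectorUnitary : Matrix n n ℝ) else 0

/-- Loewner (positive semidefinite) order: `B ≤ C`. -/
def loewnerLE {n : Type*} [Fintype n] (B C : Matrix n n ℝ) : Prop := (C - B).PosSemidef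

/-- `D` is the positive semidefinite square root of `B`. -/
def IsSqrtOf {n : Type*} [Fintype n] (D B : Matrix n n ℝ) : Prop :=
  D.PosSemidef ∧ D * D = B

/-- `Δ(B, B̆) = ‖B^{-1/2} B̆ B^{-1/2} - I‖`. -/
def DeltaM {n : Type*} [Fintype n] [DecidableEq n] (B C : Matrix n n ℝ) : ℝ :=
  opNorm (matSqrt B⁻¹ * C * matSqrt B⁻¹ - 1)

/-- Centered Gaussian measure with covariance `S` (defined through its density). -/
def gaussianCov {n : Type*} [Fintype n] [DecidableEq n] (S : Matrix n n ℝ) :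
    Measure (n → ℝ) :=
  (∫⁻ x, ENNReal.ofReal (Real.exp (-(x ⬝ᵥ S⁻¹.mulVec x) / 2)))⁻¹ •
    (volume.withDensity fun x => ENNReal.ofReal (Real.exp (-(x ⬝ᵥ S⁻¹.mulVec x) / 2)))

/-- Measure with density proportional to `exp (L υ) · 1_S(υ)`. -/
def posterior {V : Type*} [MeasureSpace V] (L : V → ℝ) (S : Set V) : Measure V :=
  (∫⁻ x, S.indicator (fun y => ENNReal.ofReal (Real.exp (L y))) x)⁻¹ •
    volume.withDensity (S.indicator fun y => ENNReal.ofReal (Real.exp (L y)))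

variable {p q : ℕ}

/-- `f`-component of the total parameter. -/
def fpart (υ : (Fin p ⊕ Fin q) → ℝ) : Fin p → ℝ := fun i => υ (Sum.inl i)

/-- `g`-component of the total parameter. -/
def gpart (υ : (Fin p ⊕ Fin q) → ℝ) : Fin q → ℝ := fun j => υ (Sum.inr j)

/-- The penalized log-likelihood of the calming approach. -/
def LG (A : (Fin p → ℝ) → (Fin q → ℝ)) (Y : Fin q → ℝ) (σ lam : ℝ)
    (G : Matrix (Fin p) (Fin p) ℝ) (Γm : Matrix (Fin q) (Fin q) ℝ)
    (f0 : Fin p → ℝ) (g0 : Fin q → ℝ) (υ : (Fin p ⊕ Fin q) → ℝ) : ℝ :=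
  -(enorm (Y - gpart υ) ^ 2) / (2 * σ ^ 2) - lam / 2 * enorm (gpart υ - A (fpart υ)) ^ 2
    - enorm (G.mulVec (fpart υ - f0)) ^ 2 / 2 - enorm (Γm.mulVec (gpart υ - g0)) ^ 2 / 2

/-- `m`-th directional (Gateaux) derivative of the structural penalty `‖g - A(f)‖²`. -/
def sDeriv (A : (Fin p → ℝ) → (Fin q → ℝ)) (m : ℕ) (υ u : (Fin p ⊕ Fin q) → ℝ) : ℝ :=
  iteratedDeriv m (fun t : ℝ => enorm (gpart (υ + t • u) - A (fpart (υ + t • u))) ^ 2) 0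

/-- `δ_{3,G}(r)`. -/
def delta3G (A : (Fin p → ℝ) → (Fin q → ℝ))
    (DG : Matrix (Fin p ⊕ Fin q) (Fin p ⊕ Fin q) ℝ) (υG : (Fin p ⊕ Fin q) → ℝ) (r : ℝ) : ℝ :=
  sSup {v | ∃ υ u, enorm (DG.mulVec (υ - υG)) ≤ r ∧ enorm (DG.mulVec u) ≤ r ∧
    v = |sDeriv A 3 υ u|}

/-- `δ_m(r₀)`, `m = 3,4`, where `Dm υ = 𝔍(υ)^{1/2}`. -/
def deltam (A : (Fin p → ℝ) → (Fin q → ℝ))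
    (Dm : ((Fin p ⊕ Fin q) → ℝ) → Matrix (Fin p ⊕ Fin q) (Fin p ⊕ Fin q) ℝ)
    (Υ : Set ((Fin p ⊕ Fin q) → ℝ)) (m : ℕ) (r : ℝ) : ℝ :=
  sSup {v | ∃ υ ∈ Υ, ∃ u, enorm ((Dm υ).mulVec u) ≤ r ∧ v = |sDeriv A m υ u|}

/-- `J` is the (directional) negative Hessian of `F`. -/
def IsDirectionalHessian (F : ((Fin p ⊕ Fin q) → ℝ) → ℝ)
    (J : ((Fin p ⊕ Fin q) → ℝ) → Matrix (Fin p ⊕ Fin q) (Fin p ⊕ Fin q) ℝ) : Prop :=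
  ∀ υ u, iteratedDeriv 2 (fun t : ℝ => F (υ + t • u)) 0 = -(u ⬝ᵥ (J υ).mulVec u)

/-- The ratio `ρ(r₀)` of posterior-type masses outside/inside the local ellipsoid. -/
def rhoVal (L : ((Fin p ⊕ Fin q) → ℝ) → ℝ) (υt : (Fin p ⊕ Fin q) → ℝ)
    (Dt : Matrix (Fin p ⊕ Fin q) (Fin p ⊕ Fin q) ℝ) (r0 : ℝ) : ℝ :=
  ((∫⁻ u in {u | r0 < enorm (Dt.mulVec u)}, ENNReal.ofReal (Real.exp (L (υt + u)))) /
    (∫⁻ u in {u | enorm (Dt.mulVec u) ≤ r0}, ENNReal.ofReal (Real.exp (L (υt + u))))).toReal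

lemma enorm_sub_comm {n : Type*} [Fintype n] (v w : n → ℝ) :
    enorm (v - w) = enorm (w - v) := by
  rw [← neg_sub, enorm]
  simp only [Pi.neg_apply, neg_sq]
  rfl

lemma misfit_le_neg_two_mul_LG (A : (Fin p → ℝ) → (Fin q → ℝ)) (Y : Fin q → ℝ) (σ lam : ℝ)
    (G : Matrix (Fin p) (Fin p) ℝ) (Γm : Matrix (Fin q) (Fin q) ℝ)
    (f0 : Fin p → ℝ) (g0 : Fin q → ℝ) (υ : (Fin p ⊕ Fin q) → ℝ) :
    (σ ^ 2)⁻¹ * enorm (Y - gpart υ) ^ 2 + lam * enorm (A (fpart υ) - gpart υ) ^ 2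
      ≤ -2 * LG A Y σ lam G Γm f0 g0 υ := by
  have hG := sq_nonneg (enorm (G.mulVec (fpart υ - f0)))
  have hΓ := sq_nonneg (enorm (Γm.mulVec (gpart υ - g0)))
  rw [LG, enorm_sub_comm (A _)]
  field_simp
  linarith

lemma LG_nonpos (A : (Fin p → ℝ) → (Fin q → ℝ)) (Y : Fin q → ℝ) (σ lam : ℝ) (hlam : 0 ≤ lam)
    (G : Matrix (Fin p) (Fin p) ℝ) (Γm : Matrix (Fin q) (Fin q) ℝ)
    (f0 : Fin p → ℝ) (g0 : Fin q → ℝ) (υ : (Fin p ⊕ Fin q) → ℝ) :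
    LG A Y σ lam G Γm f0 g0 υ ≤ 0 := by
  have := misfit_le_neg_two_mul_LG A Y σ lam G Γm f0 g0 υ
  have : 0 ≤ (σ ^ 2)⁻¹ * enorm (Y - gpart υ) ^ 2 := by positivity
  have : 0 ≤ lam * enorm (A (fpart υ) - gpart υ) ^ 2 := by positivity
  linarith

lemma LG_truth_eq (A : (Fin p → ℝ) → (Fin q → ℝ)) (σ lam : ℝ)
    (G : Matrix (Fin p) (Fin p) ℝ) (Γm : Matrix (Fin q) (Fin q) ℝ)
    (f0 : Fin p → ℝ) (g0 : Fin q → ℝ) (f : Fin p → ℝ) :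
    LG A (A f) σ lam G Γm f0 g0 (Sum.elim f (A f))
      = -(enorm (G.mulVec (f - f0)) ^ 2 + enorm (Γm.mulVec (A f - g0)) ^ 2) / 2 := by
  have hf : fpart (Sum.elim f (A f) : (Fin p ⊕ Fin q) → ℝ) = f := rfl
  have hg : gpart (Sum.elim f (A f) : (Fin p ⊕ Fin q) → ℝ) = A f := rfl
  have hzero : enorm (0 : Fin q → ℝ) = 0 := by simp [enorm]
  rw [LG, hf, hg, sub_self, hzero]
  ring

theorem bias_smoothness_general {p q : ℕ}
    (A : (Fin p → ℝ) → (Fin q → ℝ))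
    (σ lam : ℝ) (hlam : lam = (σ ^ 2)⁻¹)
    (G : Matrix (Fin p) (Fin p) ℝ)
    (Γm : Matrix (Fin q) (Fin q) ℝ)
    (fstar : Fin p → ℝ)
    (Υ : Set ((Fin p ⊕ Fin q) → ℝ))
    (υG : (Fin p ⊕ Fin q) → ℝ)
    (hυGmax : ∀ υ ∈ Υ, LG A (A fstar) σ lam G Γm 0 0 υ ≤ LG A (A fstar) σ lam G Γm 0 0 υG)
    (hstar : Sum.elim fstar (A fstar) ∈ Υ)
    (CGΓ : ℝ)
    (hcoord : enorm (Γm.mulVec (A fstar)) ^ 2 ≤ CGΓ * enorm (G.mulVec fstar) ^ 2) :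
    ((σ ^ 2)⁻¹ * enorm (A fstar - gpart υG) ^ 2 + lam * enorm (A (fpart υG) - gpart υG) ^ 2
        ≤ enorm (G.mulVec fstar) ^ 2 + enorm (Γm.mulVec (A fstar)) ^ 2) ∧
    (LG A (A fstar) σ lam G Γm 0 0 υG - LG A (A fstar) σ lam G Γm 0 0 (Sum.elim fstar (A fstar))
        ≤ (enorm (G.mulVec fstar) ^ 2 + enorm (Γm.mulVec (A fstar)) ^ 2) / 2 ∧
      (enorm (G.mulVec fstar) ^ 2 + enorm (Γm.mulVec (A fstar)) ^ 2) / 2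
        ≤ (CGΓ + 1) / 2 * enorm (G.mulVec fstar) ^ 2) := by
  have htruth := LG_truth_eq A σ lam G Γm 0 0 fstar
  simp only [sub_zero] at htruth
  have hmax := hυGmax _ hstar
  have hnonpos := LG_nonpos A (A fstar) σ lam (by rw [hlam]; positivity) G Γm 0 0 υG
  refine ⟨?_, by linarith, by linarith⟩
  calc _ ≤ -2 * LG A (A fstar) σ lam G Γm 0 0 υG := misfit_le_neg_two_mul_LG ..
    _ ≤ _ := by linarith

/-- bias bound via smoothness of the truth (Theorem `TLbiasGPGPY`). -/
theorem bias_smoothness {p q : ℕ}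
    (A : (Fin p → ℝ) → (Fin q → ℝ))
    (σ lam : ℝ) (hσ : 0 < σ) (hlam : lam = (σ ^ 2)⁻¹)
    (G : Matrix (Fin p) (Fin p) ℝ) (hG : G.PosDef)
    (Γm : Matrix (Fin q) (Fin q) ℝ) (hΓ : Γm.PosDef)
    (fstar : Fin p → ℝ)
    (Υ : Set ((Fin p ⊕ Fin q) → ℝ)) (hΥo : IsOpen Υ) (hΥc : Convex ℝ Υ)
    (hconc : ConcaveOn ℝ Υ (LG A (A fstar) σ lam G Γm 0 0))
    (υG : (Fin p ⊕ Fin q) → ℝ) (hυGmem : υG ∈ Υ)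
    (hυGmax : ∀ υ ∈ Υ, LG A (A fstar) σ lam G Γm 0 0 υ ≤ LG A (A fstar) σ lam G Γm 0 0 υG)
    (hstar : Sum.elim fstar (A fstar) ∈ Υ)
    (CGΓ : ℝ) (hCGΓ : 0 < CGΓ)
    (hcoord : enorm (Γm.mulVec (A fstar)) ^ 2 ≤ CGΓ * enorm (G.mulVec fstar) ^ 2) :
    ((σ ^ 2)⁻¹ * enorm (A fstar - gpart υG) ^ 2 + lam * enorm (A (fpart υG) - gpart υG) ^ 2
        ≤ enorm (G.mulVec fstar) ^ 2 + enorm (Γm.mulVec (A fstar)) ^ 2) ∧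
    (LG A (A fstar) σ lam G Γm 0 0 υG - LG A (A fstar) σ lam G Γm 0 0 (Sum.elim fstar (A fstar))
        ≤ (enorm (G.mulVec fstar) ^ 2 + enorm (Γm.mulVec (A fstar)) ^ 2) / 2 ∧
      (enorm (G.mulVec fstar) ^ 2 + enorm (Γm.mulVec (A fstar)) ^ 2) / 2
        ≤ (CGΓ + 1) / 2 * enorm (G.mulVec fstar) ^ 2) :=
  bias_smoothness_general A σ lam hlam G Γm fstar Υ υG hυGmax hstar CGΓ hcoord

end Calming
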